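/- Let G and H be finite simple graphs with a bijection φ : E(G) → E(H) between their edge sets, and let S be a subspace of the cycle space of G over F_2 that is locally connected. Suppose that the image of S under the induced isomorphism of F_2-vector spaces (from functions E(G) → F_2 to functions E(H) → F_2) equals the cut space of H. Then for every vertex g of G incident with at least one edge, the image under φ of the set of edges of G incident with g is the edge set of a cycle of the graph H. -/

import Mathlib

open SimpleGraph

/-- The cycle space of `G` over `F₂`, inside the space of functions `E(G) → F₂`:
the span of the characteristic vectors of the edge sets of cycles of `G`. -/
def cycleSpace {V : Type*} [DecidableEq V] (G : SimpleGraph V) :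
    Submodule (ZMod 2) (G.edgeSet → ZMod 2) :=
  Submodule.span (ZMod 2)
    {f | ∃ (u : V) (c : G.Walk u u), c.IsCycle ∧
      f = fun e : G.edgeSet => if (e : Sym2 V) ∈ c.edges then 1 else 0}

/-- The cut space of `H` over `F₂`, inside the space of functions `E(H) → F₂`:
the span of the characteristic vectors of the atomic cuts `δ_H(h)`. -/
def cutSpace {W : Type*} [DecidableEq W] (H : SimpleGraph W) :
    Submodule (ZMod 2) (H.edgeSet → ZMod 2) :=
  Submodule.span (ZMod 2)
    {f | ∃ h : W, f = fun e : H.edgeSet => if h ∈ (e : Sym2 W) then 1 else 0}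

/-- A subspace `S` of the cycle space of `G` is locally connected if for every vertex `v`,
no nonempty proper subset of the set of edges incident with `v` is orthogonal to every
element of `S`. -/
def LocallyConnected {V : Type*} [DecidableEq V] (G : SimpleGraph V)
    (S : Submodule (ZMod 2) (G.edgeSet → ZMod 2)) : Prop :=
  ∀ (v : V) (X : Finset G.edgeSet), (∀ e ∈ X, v ∈ (e : Sym2 V)) → X.Nonempty →
    (∃ e : G.edgeSet, v ∈ (e : Sym2 V) ∧ e ∉ X) →
    ∃ w ∈ S, ∑ e ∈ X, w e ≠ 0

/-!
Elements of the cycle space of `G` meet every star evenly. Pulling the atomic cuts of `H` back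
along `φ` into `S` therefore shows that the image `T` of the star of `g` meets every star of `H`
evenly, so the nonempty edge set `T` contains the edge set of a cycle `C` of `H`. Conversely every
element of `S` is pushed into the cut space of `H` and so meets `C` evenly: the preimage of `E(C)`
is a nonempty part of the star of `g` orthogonal to `S`, and local connectivity forces it to be
the whole star, i.e. `E(C) = T`.
-/

open Finset

theorem sum_eq_zero_of_mem_span {ι R : Type*} [CommSemiring R] {s : Set (ι → R)} {X : Finset ι}
    (hs : ∀ f ∈ s, ∑ i ∈ X, f i = 0) {w : ι → R} (hw : w ∈ Submodule.span R s) :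
    ∑ i ∈ X, w i = 0 := by
  have hker : Submodule.span R s ≤ LinearMap.ker (∑ i ∈ X, LinearMap.proj i) :=
    Submodule.span_le.mpr fun f hf => by simpa using hs f hf
  simpa using hker hw

namespace SimpleGraph

variable {V : Type*} {G : SimpleGraph V}

theorem Walk.IsTrail.even_card_filter_mem_edges [DecidableEq V] [Fintype G.edgeSet] {u : V}
    {c : G.Walk u u} (hc : c.IsTrail) (x : V) :
    Even #{e : G.edgeSet | (e : Sym2 V) ∈ c.edges ∧ x ∈ (e : Sym2 V)} := by
  have hcount : #{e : G.edgeSet | (e : Sym2 V) ∈ c.edges ∧ x ∈ (e : Sym2 V)} =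
      c.edges.countP (x ∈ ·) := by
    rw [List.countP_eq_length_filter, ← List.toFinset_card_of_nodup (hc.edges_nodup.filter _),
      ← card_map (Function.Embedding.subtype _)]
    congr 1
    ext e
    simp only [mem_map, mem_filter_univ, List.mem_toFinset, List.mem_filter, decide_eq_true_eq]
    constructor
    · rintro ⟨e, he, rfl⟩
      exact he
    · exact fun he => ⟨⟨e, c.edges_subset_edgeSet he.1⟩, he, rfl⟩
  rw [hcount, hc.even_countP_edges_iff]
  exact fun h => absurd rfl h

theorem Walk.IsPath.exists_isCycle_or_isPath_cons {u v w : V} {p : G.Walk u v} (hp : p.IsPath)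
    (h : G.Adj w u) (hw : w ≠ p.snd) :
    (∃ (x : V) (c : G.Walk x x), c.IsCycle) ∨ (Walk.cons h p).IsPath := by
  classical
  by_cases hws : w ∈ p.support
  · refine .inl ⟨w, .cons h (p.takeUntil w hws), (cons_isCycle_iff _ _).mpr
      ⟨hp.takeUntil hws, fun hmem => hw (hp.eq_snd_of_mem_edges ?_)⟩⟩
    exact Sym2.eq_swap ▸ p.edges_takeUntil_subset_edges hws hmem
  · exact .inr ((cons_isPath_iff _ _).mpr ⟨hp, hws⟩)

theorem exists_adj_ne_of_degree_ne_one {v x : V} [Fintype (G.neighborSet v)]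
    (hv : G.degree v ≠ 1) (hx : G.Adj v x) : ∃ w, G.Adj v w ∧ w ≠ x := by
  by_contra! hcon
  exact hv (degree_eq_one_iff_existsUnique_adj.mpr ⟨x, hx, hcon⟩)

theorem exists_isCycle_of_degree_ne_one [Finite V] [G.LocallyFinite]
    (hdeg : ∀ v, G.degree v ≠ 1) (hG : G.edgeSet.Nonempty) :
    ∃ (u : V) (c : G.Walk u u), c.IsCycle := by
  by_contra hno
  -- Without cycles, a path can always be extended at its start, through a second neighbour.
  have hlong : ∀ n, ∃ (u v : V) (p : G.Walk u v), p.IsPath ∧ n < p.length := by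
    intro n
    induction n with
    | zero =>
      obtain ⟨⟨a, b⟩, hab⟩ := hG
      exact ⟨a, b, hab.toWalk, hab.isPath_toWalk, zero_lt_one⟩
    | succ n ih =>
      obtain ⟨u, v, p, hp, hlen⟩ := ih
      have hsnd : G.Adj u p.snd := p.adj_snd (Walk.not_nil_iff_lt_length.mpr (by omega))
      obtain ⟨w, huw, hw⟩ := exists_adj_ne_of_degree_ne_one (hdeg u) hsnd
      refine ⟨w, v, .cons huw.symm p, ?_, by simpa using hlen⟩
      exact (hp.exists_isCycle_or_isPath_cons huw.symm hw).resolve_left hno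
  have := Fintype.ofFinite V
  obtain ⟨u, v, p, hp, hlen⟩ := hlong (Fintype.card V)
  exact hlen.not_gt hp.length_lt

theorem degree_eq_ncard_incidenceSet [DecidableEq V] (a : V) [Fintype (G.neighborSet a)] :
    G.degree a = (G.incidenceSet a).ncard := by
  rw [← card_incidenceSet_eq_degree, ← Nat.card_coe_set_eq, Nat.card_eq_fintype_card]

theorem exists_isCycle_edges_subset_of_even_ncard [Finite V] (T : Set (Sym2 V))
    (hT : T ⊆ G.edgeSet) (hne : T.Nonempty) (heven : ∀ a, Even {e ∈ T | a ∈ e}.ncard) :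
    ∃ (u : V) (c : G.Walk u u), c.IsCycle ∧ {e | e ∈ c.edges} ⊆ T := by
  classical
  have := Fintype.ofFinite V
  have hedge : (fromEdgeSet T).edgeSet = T := by
    rw [edgeSet_fromEdgeSet, sdiff_eq_left]
    exact Set.disjoint_left.mpr fun e he => G.not_isDiag_of_mem_edgeSet (hT he)
  have hdeg (a : V) : (fromEdgeSet T).degree a ≠ 1 := by
    rw [degree_eq_ncard_incidenceSet, incidenceSet, hedge]
    exact fun h => Nat.not_even_one (h ▸ heven a)
  obtain ⟨u, c, hc⟩ := exists_isCycle_of_degree_ne_one hdeg (hedge.symm ▸ hne)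
  have hle : fromEdgeSet T ≤ G := fun _ _ hab => hT hab.1
  refine ⟨u, c.mapLe hle, hc.mapLe hle, fun e he => ?_⟩
  rw [← hedge]
  exact c.edges_subset_edgeSet (c.edges_mapLe_eq_edges hle ▸ he)

end SimpleGraph

section Orthogonality

variable {V W : Type*} [DecidableEq V] [DecidableEq W] {G : SimpleGraph V} {H : SimpleGraph W}

theorem sum_star_eq_zero_of_mem_cycleSpace [Fintype G.edgeSet] {w : G.edgeSet → ZMod 2}
    (hw : w ∈ cycleSpace G) (v : V) :
    ∑ e ∈ ({e | v ∈ (e : Sym2 V)} : Finset G.edgeSet), w e = 0 := by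
  refine sum_eq_zero_of_mem_span ?_ hw
  rintro _ ⟨u, c, hc, rfl⟩
  rw [sum_boole, filter_filter, ZMod.natCast_eq_zero_iff_even]
  simpa only [and_comm] using hc.isTrail.even_card_filter_mem_edges v

theorem sum_edges_eq_zero_of_mem_cutSpace [Fintype H.edgeSet] {w : H.edgeSet → ZMod 2}
    (hw : w ∈ cutSpace H) {u : W} {c : H.Walk u u} (hc : c.IsTrail) :
    ∑ e ∈ ({e | (e : Sym2 W) ∈ c.edges} : Finset H.edgeSet), w e = 0 := by
  refine sum_eq_zero_of_mem_span ?_ hw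
  rintro _ ⟨a, rfl⟩
  rw [sum_boole, filter_filter, ZMod.natCast_eq_zero_iff_even]
  exact hc.even_card_filter_mem_edges a

variable (φ : G.edgeSet ≃ H.edgeSet) {S : Submodule (ZMod 2) (G.edgeSet → ZMod 2)}

theorem even_ncard_image_star_inter_star [Fintype G.edgeSet] (hS : S ≤ cycleSpace G)
    (hcut : cutSpace H ≤ S.map (LinearMap.funLeft (ZMod 2) (ZMod 2) φ.symm)) (g : V) (a : W) :
    Even {e ∈ Subtype.val '' (φ '' {e : G.edgeSet | g ∈ (e : Sym2 V)}) | a ∈ e}.ncard := by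
  obtain ⟨w, hwS, hw⟩ := hcut (Submodule.subset_span ⟨a, rfl⟩)
  have hwφ (e : G.edgeSet) : w e = if a ∈ (φ e : Sym2 W) then 1 else 0 := by
    simpa using congrFun hw (φ e)
  have himage : {e ∈ Subtype.val '' (φ '' {e : G.edgeSet | g ∈ (e : Sym2 V)}) | a ∈ e} =
      Subtype.val ''
        (φ '' ↑({e | g ∈ (e : Sym2 V) ∧ a ∈ (φ e : Sym2 W)} : Finset G.edgeSet)) := by
    ext; simp
  rw [himage, Set.ncard_image_of_injective _ Subtype.val_injective,
    Set.ncard_image_of_injective _ φ.injective, Set.ncard_coe_finset,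
    ← ZMod.natCast_eq_zero_iff_even, ← filter_filter, ← sum_boole]
  simpa only [hwφ] using sum_star_eq_zero_of_mem_cycleSpace (hS hwS) g

theorem image_star_subset_edges [Fintype H.edgeSet] (hloc : LocallyConnected G S)
    (hmap : S.map (LinearMap.funLeft (ZMod 2) (ZMod 2) φ.symm) ≤ cutSpace H) {g : V} {u : W}
    {c : H.Walk u u} (hc : c.IsTrail) (hne : ¬c.Nil)
    (hsub : {e | e ∈ c.edges} ⊆ Subtype.val '' (φ '' {e : G.edgeSet | g ∈ (e : Sym2 V)})) :
    Subtype.val '' (φ '' {e : G.edgeSet | g ∈ (e : Sym2 V)}) ⊆ {e | e ∈ c.edges} := by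
  rintro _ ⟨_, ⟨e, he, rfl⟩, rfl⟩
  by_contra hnot
  set X := ({e | (e : Sym2 W) ∈ c.edges} : Finset H.edgeSet).map φ.symm.toEmbedding
  have hXstar : ∀ e ∈ X, g ∈ (e : Sym2 V) := by
    simp only [X, mem_map_equiv, mem_filter_univ, Equiv.symm_symm]
    intro e he
    obtain ⟨_, ⟨e', he', rfl⟩, hφ⟩ := hsub he
    rwa [φ.injective (Subtype.val_injective hφ)] at he'
  have hXne : X.Nonempty := by
    obtain ⟨s, hs⟩ := List.exists_mem_of_ne_nil _ (Walk.edges_eq_nil.not.mpr hne)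
    exact ⟨φ.symm ⟨s, c.edges_subset_edgeSet hs⟩, by simpa [X] using hs⟩
  have heX : e ∉ X := by
    simpa [X] using hnot
  obtain ⟨w, hwS, hw⟩ := hloc g X hXstar hXne ⟨e, he, heX⟩
  apply hw
  rw [sum_map]
  exact sum_edges_eq_zero_of_mem_cutSpace (hmap (Submodule.mem_map_of_mem hwS)) hc

end Orthogonality

theorem atomic_cut_is_cycle_of_dual_general
    {V W : Type*} [DecidableEq V] [Fintype W] [DecidableEq W]
    (G : SimpleGraph V) (H : SimpleGraph W)
    (φ : G.edgeSet ≃ H.edgeSet)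
    (S : Submodule (ZMod 2) (G.edgeSet → ZMod 2))
    (hS : S ≤ cycleSpace G) (hloc : LocallyConnected G S)
    (hmap : Submodule.map
        (LinearMap.funLeft (ZMod 2) (ZMod 2) (φ.symm : H.edgeSet → G.edgeSet)) S
      = cutSpace H) :
    ∀ g : V, (∃ e : G.edgeSet, g ∈ (e : Sym2 V)) →
      ∃ (h : W) (c : H.Walk h h), c.IsCycle ∧
        {e : Sym2 W | e ∈ c.edges}
          = Subtype.val '' (φ '' {e : G.edgeSet | g ∈ (e : Sym2 V)}) := by
  rintro g ⟨e₀, he₀⟩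
  have : Finite G.edgeSet := .of_equiv _ φ.symm
  have := Fintype.ofFinite G.edgeSet
  have := Fintype.ofFinite H.edgeSet
  obtain ⟨h, c, hc, hcT⟩ := H.exists_isCycle_edges_subset_of_even_ncard
    (Subtype.val '' (φ '' {e : G.edgeSet | g ∈ (e : Sym2 V)}))
    (by rintro _ ⟨e, -, rfl⟩; exact e.2) ⟨_, φ e₀, ⟨e₀, he₀, rfl⟩, rfl⟩
    (even_ncard_image_star_inter_star φ hS hmap.ge g)
  exact ⟨h, c, hc,
    hcT.antisymm (image_star_subset_edges φ hloc hmap.le hc.isTrail hc.not_nil hcT)⟩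

theorem atomic_cut_is_cycle_of_dual
    {V W : Type*} [Fintype V] [DecidableEq V] [Fintype W] [DecidableEq W]
    (G : SimpleGraph V) (H : SimpleGraph W)
    (φ : G.edgeSet ≃ H.edgeSet)
    (S : Submodule (ZMod 2) (G.edgeSet → ZMod 2))
    (hS : S ≤ cycleSpace G) (hloc : LocallyConnected G S)
    (hmap : Submodule.map
        (LinearMap.funLeft (ZMod 2) (ZMod 2) (φ.symm : H.edgeSet → G.edgeSet)) S
      = cutSpace H) :
    ∀ g : V, (∃ e : G.edgeSet, g ∈ (e : Sym2 V)) →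
      ∃ (h : W) (c : H.Walk h h), c.IsCycle ∧
        {e : Sym2 W | e ∈ c.edges}
          = Subtype.val '' (φ '' {e : G.edgeSet | g ∈ (e : Sym2 V)}) :=
  atomic_cut_is_cycle_of_dual_general G H φ S hS hloc hmap
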